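/- arXiv:2002.08411 — 2 statements merged into one kernel-verified Lean document; each statement's English description precedes it below -/
import Mathlib

section
/- Let A be a Dedekind domain, let r ≥ 2 be an integer, and let 𝔪 be a nonzero ideal of A such that A/𝔪 is finite. Then there exists a real constant c > 0 (depending only on A, r and 𝔪) such that for every nonzero ideal 𝔞 of A with A/𝔞 finite and every subgroup G of GL_r(A/𝔞) which equals the full preimage of its image under the natural projection GL_r(A/𝔞) → GL_r(A/(𝔞 + 𝔪)), one has c · |A/𝔞|^(r²−1) · (∏_{𝔭 prime ideal, 𝔞 ⊆ 𝔭} ∏_{i=2}^{r} (1 − |A/𝔭|^(−i))) · |Scal_G| ≤ |G| ≤ |A/𝔞|^(r²−1) · |Scal_G|. -/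
/-- The subgroup of scalar matrices `{λ·I : λ ∈ Rˣ}` inside `GL n R`. -/
def scalarSubgroup (n : Type*) [DecidableEq n] [Fintype n] (R : Type*) [CommRing R] :
    Subgroup (Matrix.GeneralLinearGroup n R) :=
  (Units.map (Matrix.scalar n).toMonoidHom).range

/-- The projection `GL_r(A/𝔞) → GL_r(A/(𝔞+𝔪))` induced by the canonical surjection of
quotient rings (note `𝔞 + 𝔪 = 𝔞 ⊔ 𝔪` as ideals). -/
def glFactor {A : Type*} [CommRing A] (r : ℕ) (𝔞 𝔪 : Ideal A) :
    Matrix.GeneralLinearGroup (Fin r) (A ⧸ 𝔞) →*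
      Matrix.GeneralLinearGroup (Fin r) (A ⧸ (𝔞 ⊔ 𝔪)) :=
  Matrix.GeneralLinearGroup.map (Ideal.Quotient.factor (S := 𝔞) (T := 𝔞 ⊔ 𝔪) le_sup_left)

/-!
The scalar subgroup `Z ≅ (A/𝔞)ˣ` has index `|A/𝔞|^(r²-1) ∏_{𝔭 ⊇ 𝔞} ∏_{i=2}^r (1 - |A/𝔭|⁻ⁱ)` in
`GL_r(A/𝔞)`. Indeed, by the Chinese remainder theorem both orders factor over the local rings
`A/𝔭^e`, and since reduction `A/𝔭^e → A/𝔭` is a local homomorphism, `GL_r(A/𝔭^e)` is the full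
preimage of `GL_r(A/𝔭)`, whose order is classical. As `G ∩ Z` is the kernel of `G → GL_r(A/𝔞)/Z`,
`|G| ≤ |G ∩ Z| [GL_r : Z]`: the upper bound. Conversely `G` contains the kernel of reduction to
`GL_r(A/(𝔞+𝔪))`, so `|G| |A/𝔪|^(r²) ≥ |GL_r(A/𝔞)| = |Z| [GL_r : Z] ≥ |G ∩ Z| [GL_r : Z]`, and
`c = |A/𝔪|^(-r²)` works.
-/

open Function Finset UniqueFactorizationMonoid

section UnitsOfLocalHom

variable {R S : Type*} [Ring R] [Ring S] (f : R →+* S) [IsLocalHom f]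

lemma units_map_surjective_of_isLocalHom (hf : Surjective f) :
    Surjective (Units.map (f : R →* S)) := fun u => by
  obtain ⟨a, ha⟩ := hf u
  exact ⟨(isUnit_of_map_unit f a (ha ▸ u.isUnit)).unit, Units.ext ha⟩

noncomputable def kerUnitsMapEquivKer :
    (Units.map (f : R →* S)).ker ≃ f.toAddMonoidHom.ker where
  toFun u := ⟨(u : Rˣ) - 1, by
    have hu : f (u : Rˣ) = 1 := congrArg Units.val u.2
    simp [hu]⟩
  invFun a := ⟨(isUnit_of_map_unit f ((a : R) + 1) (by
      have ha : f a = 0 := a.2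
      simp [ha])).unit, by
    have ha : f a = 0 := a.2
    ext
    simp [ha]⟩
  left_inv u := by ext; simp
  right_inv a := by ext; simp

lemma card_units_mul_card_eq_of_surjective [Finite R] (hf : Surjective f) :
    Nat.card Rˣ * Nat.card S = Nat.card R * Nat.card Sˣ := by
  have hunits : Nat.card Rˣ = Nat.card (Units.map (f : R →* S)).ker * Nat.card Sˣ := by
    rw [← (Units.map (f : R →* S)).ker.card_mul_index, Subgroup.index_ker,
      MonoidHom.range_eq_top_of_surjective _ (units_map_surjective_of_isLocalHom f hf),
      Subgroup.card_top]
  have hring : Nat.card R = Nat.card f.toAddMonoidHom.ker * Nat.card S := by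
    rw [← f.toAddMonoidHom.ker.card_mul_index, AddSubgroup.index_ker,
      AddMonoidHom.range_eq_top_of_surjective f.toAddMonoidHom hf, AddSubgroup.card_top]
  rw [hunits, hring, Nat.card_congr (kerUnitsMapEquivKer f)]
  ring

end UnitsOfLocalHom

section MatrixCard

variable {n : Type*} [Fintype n]

lemma Matrix.natCard_eq_pow (R : Type*) :
    Nat.card (Matrix n n R) = Nat.card R ^ (Fintype.card n ^ 2) := by
  rw [Matrix, Nat.card_fun, Nat.card_fun, Nat.card_eq_fintype_card (α := n), ← pow_mul, sq]

lemma Matrix.card_GL_le [DecidableEq n] (R : Type*) [CommRing R] [Finite R] :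
    Nat.card (GL n R) ≤ Nat.card R ^ (Fintype.card n ^ 2) :=
  Matrix.natCard_eq_pow (n := n) R ▸ Nat.card_le_card_of_injective _ Units.val_injective

end MatrixCard

lemma prod_range_pow_sub_pow_eq {K : Type*} [Field K] (q : K) (hq : q ≠ 0) (r : ℕ) :
    ∏ i ∈ range r, (q ^ r - q ^ i) = q ^ (r ^ 2) * ∏ i ∈ Icc 1 r, (1 - q⁻¹ ^ i) := by
  have hreflect : ∏ i ∈ Icc 1 r, (1 - q⁻¹ ^ i) = ∏ i ∈ range r, (1 - q⁻¹ ^ (r - i)) :=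
    prod_nbij' (r - ·) (r - ·) (by intro i; simp; omega) (by intro i; simp; omega)
      (by intro i; simp; omega) (by intro i; simp; omega)
      (by intro i hi; simp only [mem_Icc] at hi; rw [Nat.sub_sub_self hi.2])
  have hfactor : ∀ i ∈ range r, q ^ r - q ^ i = q ^ r * (1 - q⁻¹ ^ (r - i)) := fun i hi => by
    rw [mul_sub, mul_one, inv_pow, ← pow_sub₀ _ hq (Nat.sub_le r i),
      Nat.sub_sub_self (mem_range.mp hi).le]
  rw [hreflect, prod_congr rfl hfactor, prod_mul_distrib, prod_const, card_range, ← pow_mul, sq]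

lemma Matrix.natCard_GL_field_eq (K : Type*) [Field K] [Finite K] (r : ℕ) :
    (Nat.card (GL (Fin r) K) : ℝ) =
      (Nat.card K : ℝ) ^ r ^ 2 * ∏ i ∈ Icc 1 r, (1 - (Nat.card K : ℝ)⁻¹ ^ i) := by
  have : Fintype K := Fintype.ofFinite K
  rw [Matrix.card_GL_field, ← Nat.card_eq_fintype_card, Nat.cast_prod,
    Fin.prod_univ_eq_prod_range (fun i => ((Nat.card K ^ r - Nat.card K ^ i : ℕ) : ℝ)),
    ← prod_range_pow_sub_pow_eq _ (Nat.cast_ne_zero.mpr Nat.card_pos.ne')]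
  refine prod_congr rfl fun i hi => ?_
  rw [Nat.cast_sub (Nat.pow_le_pow_right Nat.card_pos (mem_range.mp hi).le)]
  push_cast
  rfl

section MatrixOfLocalHom

variable {n R S : Type*} [Fintype n] [DecidableEq n] [CommRing R] [CommRing S]

instance RingHom.isLocalHom_mapMatrix (f : R →+* S) [IsLocalHom f] :
    IsLocalHom (f.mapMatrix : Matrix n n R →+* Matrix n n S) where
  map_nonunit M hM := by
    rw [Matrix.isUnit_iff_isUnit_det] at hM ⊢
    exact isUnit_of_map_unit f _ (by rwa [RingHom.map_det])

lemma RingHom.mapMatrix_surjective (f : R →+* S) (hf : Surjective f) :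
    Surjective (f.mapMatrix : Matrix n n R →+* Matrix n n S) :=
  fun M => ⟨M.map (surjInv hf), Matrix.ext fun i j => surjInv_eq hf (M i j)⟩

lemma card_GL_mul_pow_eq_of_surjective (f : R →+* S) [IsLocalHom f] (hf : Surjective f)
    [Finite R] :
    Nat.card (GL n R) * Nat.card S ^ (Fintype.card n ^ 2) =
      Nat.card R ^ (Fintype.card n ^ 2) * Nat.card (GL n S) := by
  have : Finite S := Finite.of_surjective f hf
  rw [← Matrix.natCard_eq_pow, ← Matrix.natCard_eq_pow]
  exact card_units_mul_card_eq_of_surjective f.mapMatrix (f.mapMatrix_surjective hf)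

end MatrixOfLocalHom

lemma card_GL_of_surjective_field {R K : Type*} [CommRing R] [Field K] [Finite R]
    (f : R →+* K) [IsLocalHom f] (hf : Surjective f) (r : ℕ) :
    (Nat.card (GL (Fin r) R) : ℝ) =
      Nat.card R ^ r ^ 2 * ∏ i ∈ Icc 1 r, (1 - (Nat.card K : ℝ)⁻¹ ^ i) := by
  have : Finite K := Finite.of_surjective f hf
  have hcount := congrArg (Nat.cast (R := ℝ))
    (card_GL_mul_pow_eq_of_surjective (n := Fin r) f hf)
  push_cast [Fintype.card_fin, Matrix.natCard_GL_field_eq] at hcount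
  have hq : (Nat.card K : ℝ) ^ r ^ 2 ≠ 0 := pow_ne_zero _ (Nat.cast_ne_zero.mpr Nat.card_pos.ne')
  exact mul_right_cancel₀ hq (by rw [hcount]; ring)

section QuotientCount

variable {A : Type*} [CommRing A]

lemma Ideal.Quotient.isLocalHom_factor_pow (I : Ideal A) {e : ℕ} (he : e ≠ 0) :
    IsLocalHom (Ideal.Quotient.factor (Ideal.pow_le_self he) : A ⧸ I ^ e →+* A ⧸ I) where
  map_nonunit x hx := by
    obtain ⟨a, rfl⟩ := Ideal.Quotient.mk_surjective x
    rw [Ideal.Quotient.factor_mk] at hx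
    exact (Ideal.Quotient.isUnit_mk_pow_iff_isUnit_mk I he).mpr hx

lemma card_GL_quotient_pow (P : Ideal A) [P.IsMaximal] {e : ℕ} (he : e ≠ 0)
    [Finite (A ⧸ P ^ e)] (r : ℕ) :
    (Nat.card (GL (Fin r) (A ⧸ P ^ e)) : ℝ) =
      Nat.card (A ⧸ P ^ e) ^ r ^ 2 * ∏ i ∈ Icc 1 r, (1 - (Nat.card (A ⧸ P) : ℝ)⁻¹ ^ i) :=
  letI := Ideal.Quotient.field P
  haveI := Ideal.Quotient.isLocalHom_factor_pow P he
  card_GL_of_surjective_field _ (Ideal.Quotient.factor_surjective _) r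

variable [IsDedekindDomain A] {𝔞 : Ideal A}

lemma card_GL_quotient (h𝔞 : 𝔞 ≠ ⊥) [Finite (A ⧸ 𝔞)] (r : ℕ) :
    (Nat.card (GL (Fin r) (A ⧸ 𝔞)) : ℝ) = Nat.card (A ⧸ 𝔞) ^ r ^ 2 *
      ∏ P ∈ (factors 𝔞).toFinset, ∏ i ∈ Icc 1 r, (1 - (Nat.card (A ⧸ P) : ℝ)⁻¹ ^ i) := by
  set Φ := IsDedekindDomain.quotientEquivPiFactors h𝔞
  have hGL : GL (Fin r) (A ⧸ 𝔞) ≃* ∀ P : (factors 𝔞).toFinset,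
      GL (Fin r) (A ⧸ (P : Ideal A) ^ (factors 𝔞).count (P : Ideal A)) :=
    (Units.mapEquiv (Φ.mapMatrix.trans Matrix.piRingEquiv).toMulEquiv).trans MulEquiv.piUnits
  have hcard : Nat.card (A ⧸ 𝔞) = ∏ P : (factors 𝔞).toFinset,
      Nat.card (A ⧸ (P : Ideal A) ^ (factors 𝔞).count (P : Ideal A)) := by
    rw [Nat.card_congr Φ.toEquiv, Nat.card_pi]
  have hlocal : ∀ P : (factors 𝔞).toFinset,
      (Nat.card (GL (Fin r) (A ⧸ (P : Ideal A) ^ (factors 𝔞).count (P : Ideal A))) : ℝ) =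
        Nat.card (A ⧸ (P : Ideal A) ^ (factors 𝔞).count (P : Ideal A)) ^ r ^ 2 *
          ∏ i ∈ Icc 1 r, (1 - (Nat.card (A ⧸ (P : Ideal A)) : ℝ)⁻¹ ^ i) := fun P => by
    have hmem := Multiset.mem_toFinset.mp P.2
    have hprime := prime_of_factor _ hmem
    have : (P : Ideal A).IsMaximal := (Ideal.isPrime_of_prime hprime).isMaximal hprime.ne_zero
    have : Finite (A ⧸ (P : Ideal A) ^ (factors 𝔞).count (P : Ideal A)) :=
      Finite.of_surjective _ ((surjective_eval P).comp Φ.surjective)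
    exact card_GL_quotient_pow _ (Multiset.count_ne_zero.mpr hmem) r
  rw [Nat.card_congr hGL.toEquiv, Nat.card_pi, Nat.cast_prod, prod_congr rfl fun P _ => hlocal P,
    prod_mul_distrib, hcard, Nat.cast_prod, prod_pow]
  exact congrArg _ (prod_coe_sort _ fun P => ∏ i ∈ Icc 1 r, (1 - (Nat.card (A ⧸ P) : ℝ)⁻¹ ^ i))

end QuotientCount

section GroupCounting

variable {G G' : Type*} [Group G] [Group G']

lemma Subgroup.card_le_card_inf_mul_index (H K : Subgroup G) [K.FiniteIndex] :
    Nat.card H ≤ Nat.card (H ⊓ K : Subgroup G) * K.index := by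
  calc Nat.card H = Nat.card (H ⊓ K : Subgroup G) * (H ⊓ K).relIndex H := by
        rw [← relIndex_bot_left, ← relIndex_bot_left]
        exact (relIndex_mul_relIndex _ _ _ bot_le inf_le_left).symm
    _ = Nat.card (H ⊓ K : Subgroup G) * K.relIndex H := by rw [inf_relIndex_left]
    _ ≤ Nat.card (H ⊓ K : Subgroup G) * K.index := by
        gcongr
        rw [← relIndex_top_right]
        exact relIndex_le_of_le_right le_top (relIndex_top_right K ▸ FiniteIndex.index_ne_zero)

lemma MonoidHom.card_le_card_mul_of_ker_le [Finite G] [Finite G'] (f : G →* G')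
    {H : Subgroup G} (hH : f.ker ≤ H) : Nat.card G ≤ Nat.card H * Nat.card G' := by
  rw [← f.ker.card_mul_index, Subgroup.index_ker]
  exact Nat.mul_le_mul (Subgroup.card_le_of_le hH) f.range.card_le_card_group

end GroupCounting

lemma card_GL_le_card_mul_of_ker_glFactor_le {A : Type*} [CommRing A] {r : ℕ} {𝔞 𝔪 : Ideal A}
    [Finite (A ⧸ 𝔞)] [Finite (A ⧸ 𝔪)] {G : Subgroup (GL (Fin r) (A ⧸ 𝔞))}
    (hG : (glFactor r 𝔞 𝔪).ker ≤ G) :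
    Nat.card (GL (Fin r) (A ⧸ 𝔞)) ≤ Nat.card G * Nat.card (A ⧸ 𝔪) ^ r ^ 2 := by
  have hsup := Ideal.Quotient.factor_surjective (le_sup_right : 𝔪 ≤ 𝔞 ⊔ 𝔪)
  have : Finite (A ⧸ 𝔞 ⊔ 𝔪) := Finite.of_surjective _ hsup
  refine ((glFactor r 𝔞 𝔪).card_le_card_mul_of_ker_le hG).trans (Nat.mul_le_mul_left _ ?_)
  calc Nat.card (GL (Fin r) (A ⧸ 𝔞 ⊔ 𝔪)) ≤ Nat.card (A ⧸ 𝔞 ⊔ 𝔪) ^ r ^ 2 := by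
        simpa using Matrix.card_GL_le (n := Fin r) (A ⧸ 𝔞 ⊔ 𝔪)
    _ ≤ Nat.card (A ⧸ 𝔪) ^ r ^ 2 := Nat.pow_le_pow_left (Nat.card_le_card_of_surjective _ hsup) _

lemma card_scalarSubgroup {n R : Type*} [DecidableEq n] [Fintype n] [Nonempty n] [CommRing R] :
    Nat.card (scalarSubgroup n R) = Nat.card Rˣ := by
  have hinj : Injective (Units.map (Matrix.scalar n : R →+* Matrix n n R).toMonoidHom) :=
    Units.map_injective fun _ _ h => Matrix.scalar_inj.mp h
  exact (Nat.card_congr (MonoidHom.ofInjective hinj).toEquiv).symm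

lemma one_sub_inv_pow_mem_Icc (q i : ℕ) : 1 - (q : ℝ)⁻¹ ^ i ∈ Set.Icc 0 1 :=
  ⟨sub_nonneg.mpr (pow_le_one₀ (by positivity) (Nat.cast_inv_le_one q)),
    sub_le_self _ (by positivity)⟩

lemma prod_prod_one_sub_inv_pow_le_one {ι : Type*} (T : Finset ι) (q : ι → ℕ) (s : Finset ℕ) :
    ∏ P ∈ T, ∏ i ∈ s, (1 - (q P : ℝ)⁻¹ ^ i) ≤ 1 :=
  prod_le_one (fun _ _ => prod_nonneg fun i _ => (one_sub_inv_pow_mem_Icc _ i).1)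
    fun _ _ => prod_le_one (fun i _ => (one_sub_inv_pow_mem_Icc _ i).1)
      fun i _ => (one_sub_inv_pow_mem_Icc _ i).2

section DedekindScalars

variable {A : Type*} [CommRing A] [IsDedekindDomain A] {𝔞 : Ideal A}

lemma finprod_isPrime_le_eq_prod_factors {M : Type*} [CommMonoid M] (h𝔞 : 𝔞 ≠ ⊥)
    (g : Ideal A → M) :
    ∏ᶠ (P : Ideal A) (_ : P.IsPrime ∧ 𝔞 ≤ P), g P = ∏ P ∈ (factors 𝔞).toFinset, g P :=
  finprod_cond_eq_prod_of_cond_iff g fun _ => by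
    rw [Multiset.mem_toFinset, factors_eq_normalizedFactors, Ideal.mem_normalizedFactors_iff h𝔞]

lemma index_scalarSubgroup (h𝔞 : 𝔞 ≠ ⊥) [Finite (A ⧸ 𝔞)] {r : ℕ} (hr : 1 ≤ r) :
    ((scalarSubgroup (Fin r) (A ⧸ 𝔞)).index : ℝ) = Nat.card (A ⧸ 𝔞) ^ (r ^ 2 - 1) *
      ∏ P ∈ (factors 𝔞).toFinset, ∏ i ∈ Icc 2 r, (1 - (Nat.card (A ⧸ P) : ℝ)⁻¹ ^ i) := by
  have : Nonempty (Fin r) := ⟨⟨0, hr⟩⟩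
  set Z := scalarSubgroup (Fin r) (A ⧸ 𝔞)
  have hZ : (Nat.card Z : ℝ) = Nat.card (A ⧸ 𝔞) *
      ∏ P ∈ (factors 𝔞).toFinset, (1 - (Nat.card (A ⧸ P) : ℝ)⁻¹) := by
    rw [card_scalarSubgroup, Nat.card_congr
      (Units.mapEquiv (Matrix.uniqueRingEquiv (m := Fin 1)).symm.toMulEquiv).toEquiv,
      card_GL_quotient h𝔞 1]
    simp
  have hGL := card_GL_quotient h𝔞 r
  rw [← insert_Icc_add_one_left_eq_Icc hr] at hGL
  simp only [Nat.reduceAdd, prod_insert (show 1 ∉ Icc 2 r by simp), pow_one] at hGL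
  rw [prod_mul_distrib, ← mul_pow_sub_one (show r ^ 2 ≠ 0 by positivity)] at hGL
  have hZpos : (0 : ℝ) < Nat.card Z := by exact_mod_cast Nat.card_pos
  refine mul_left_cancel₀ hZpos.ne' ?_
  rw [← Nat.cast_mul, Z.card_mul_index, hGL, hZ]
  ring

end DedekindScalars

theorem degree_bounds_dedekind_general (A : Type*) [CommRing A] [IsDedekindDomain A]
    (r : ℕ) (hr : 2 ≤ r) (𝔪 : Ideal A) (h𝔪fin : Finite (A ⧸ 𝔪)) :
    ∃ c : ℝ, 0 < c ∧
      ∀ 𝔞 : Ideal A, 𝔞 ≠ ⊥ → Finite (A ⧸ 𝔞) →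
        ∀ G : Subgroup (Matrix.GeneralLinearGroup (Fin r) (A ⧸ 𝔞)),
          G = Subgroup.comap (glFactor r 𝔞 𝔪) (Subgroup.map (glFactor r 𝔞 𝔪) G) →
          c * (Nat.card (A ⧸ 𝔞) : ℝ) ^ (r ^ 2 - 1) *
              (∏ᶠ (𝔭 : Ideal A) (_ : 𝔭.IsPrime ∧ 𝔞 ≤ 𝔭),
                ∏ i ∈ Finset.Icc 2 r, (1 - ((Nat.card (A ⧸ 𝔭) : ℝ))⁻¹ ^ i)) *
              (Nat.card (G ⊓ scalarSubgroup (Fin r) (A ⧸ 𝔞) : Subgroup _) : ℝ)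
            ≤ (Nat.card G : ℝ) ∧
          (Nat.card G : ℝ)
            ≤ (Nat.card (A ⧸ 𝔞) : ℝ) ^ (r ^ 2 - 1) *
              (Nat.card (G ⊓ scalarSubgroup (Fin r) (A ⧸ 𝔞) : Subgroup _) : ℝ) := by
  have hm : (0 : ℝ) < Nat.card (A ⧸ 𝔪) := by exact_mod_cast Nat.card_pos
  refine ⟨((Nat.card (A ⧸ 𝔪) : ℝ) ^ r ^ 2)⁻¹, by positivity, fun 𝔞 h𝔞 _ G hG => ?_⟩
  set Z := scalarSubgroup (Fin r) (A ⧸ 𝔞)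
  set Q := ∏ P ∈ (factors 𝔞).toFinset, ∏ i ∈ Icc 2 r, (1 - (Nat.card (A ⧸ P) : ℝ)⁻¹ ^ i)
  have hindex : (Z.index : ℝ) = Nat.card (A ⧸ 𝔞) ^ (r ^ 2 - 1) * Q :=
    index_scalarSubgroup h𝔞 (by omega)
  rw [finprod_isPrime_le_eq_prod_factors h𝔞]
  constructor
  · have hGL := card_GL_le_card_mul_of_ker_glFactor_le (hG ▸ Subgroup.ker_le_comap _ _)
    calc _ = ((Nat.card (A ⧸ 𝔪) : ℝ) ^ r ^ 2)⁻¹ * (Nat.card (G ⊓ Z : Subgroup _) * Z.index) := by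
          rw [hindex]; ring
      _ ≤ ((Nat.card (A ⧸ 𝔪) : ℝ) ^ r ^ 2)⁻¹ * (Nat.card Z * Z.index) := by
          gcongr
          exact Subgroup.card_le_of_le inf_le_right
      _ ≤ Nat.card G := by
          rw [inv_mul_le_iff₀ (by positivity), ← Nat.cast_mul, Z.card_mul_index, mul_comm]
          exact_mod_cast hGL
  · calc (Nat.card G : ℝ) ≤ Nat.card (G ⊓ Z : Subgroup _) * Z.index := by
          exact_mod_cast G.card_le_card_inf_mul_index Z
      _ ≤ Nat.card (G ⊓ Z : Subgroup _) * (Nat.card (A ⧸ 𝔞) : ℝ) ^ (r ^ 2 - 1) := by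
          rw [hindex]
          gcongr
          exact mul_le_of_le_one_right (by positivity) (prod_prod_one_sub_inv_pow_le_one _ _ _)
      _ = _ := mul_comm _ _

/-- Let `A` be a Dedekind domain, `r ≥ 2`, and `𝔪` a nonzero ideal of `A` with `A/𝔪` finite.
There is a constant `c > 0` (depending only on `A`, `r`, `𝔪`) such that for every nonzero
ideal `𝔞` with `A/𝔞` finite and every subgroup `G ≤ GL_r(A/𝔞)` equal to the full preimage of
its image in `GL_r(A/(𝔞+𝔪))`, one has
`c · |A/𝔞|^(r²−1) · ∏_{𝔭 ⊇ 𝔞 prime} ∏_{i=2}^r (1 − |A/𝔭|⁻ⁱ) · |Scal_G| ≤ |G| ≤ |A/𝔞|^(r²−1) · |Scal_G|`. -/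
theorem degree_bounds_dedekind (A : Type*) [CommRing A] [IsDomain A] [IsDedekindDomain A]
    (r : ℕ) (hr : 2 ≤ r) (𝔪 : Ideal A) (h𝔪 : 𝔪 ≠ ⊥) (h𝔪fin : Finite (A ⧸ 𝔪)) :
    ∃ c : ℝ, 0 < c ∧
      ∀ 𝔞 : Ideal A, 𝔞 ≠ ⊥ → Finite (A ⧸ 𝔞) →
        ∀ G : Subgroup (Matrix.GeneralLinearGroup (Fin r) (A ⧸ 𝔞)),
          G = Subgroup.comap (glFactor r 𝔞 𝔪) (Subgroup.map (glFactor r 𝔞 𝔪) G) →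
          c * (Nat.card (A ⧸ 𝔞) : ℝ) ^ (r ^ 2 - 1) *
              (∏ᶠ (𝔭 : Ideal A) (_ : 𝔭.IsPrime ∧ 𝔞 ≤ 𝔭),
                ∏ i ∈ Finset.Icc 2 r, (1 - ((Nat.card (A ⧸ 𝔭) : ℝ))⁻¹ ^ i)) *
              (Nat.card (G ⊓ scalarSubgroup (Fin r) (A ⧸ 𝔞) : Subgroup _) : ℝ)
            ≤ (Nat.card G : ℝ) ∧
          (Nat.card G : ℝ)
            ≤ (Nat.card (A ⧸ 𝔞) : ℝ) ^ (r ^ 2 - 1) *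
              (Nat.card (G ⊓ scalarSubgroup (Fin r) (A ⧸ 𝔞) : Subgroup _) : ℝ) :=
  degree_bounds_dedekind_general A r hr 𝔪 h𝔪fin
end

section
/- Let r ≥ 1 be an integer, let a₁, a₂ be coprime positive integers, let m be a positive divisor of a₁, and let H be a subgroup of GL_r(ℤ/mℤ). Let G ≤ GL_r(ℤ/a₁a₂ℤ) be the full preimage of H under GL_r(ℤ/a₁a₂ℤ) → GL_r(ℤ/mℤ), and let G₁ ≤ GL_r(ℤ/a₁ℤ) be the full preimage of H under GL_r(ℤ/a₁ℤ) → GL_r(ℤ/mℤ). Then there is a group isomorphism G/Scal_G ≅ (G₁/Scal_{G₁}) × PGL_r(ℤ/a₂ℤ). In particular, |G|/|Scal_G| = (|G₁|/|Scal_{G₁}|) · |PGL_r(ℤ/a₂ℤ)|. -/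
/-- The reduction map `GL_r(ℤ/aℤ) → GL_r(ℤ/bℤ)` for `b ∣ a`, induced by entrywise
reduction via the canonical ring homomorphism `ℤ/aℤ → ℤ/bℤ`. -/
def glReduction (r : ℕ) {a b : ℕ} (h : b ∣ a) :
    Matrix.GeneralLinearGroup (Fin r) (ZMod a) →* Matrix.GeneralLinearGroup (Fin r) (ZMod b) :=
  Matrix.GeneralLinearGroup.map (ZMod.castHom h (ZMod b))

theorem scalarSubgroup_le_center (n : Type*) [DecidableEq n] [Fintype n]
    (R : Type*) [CommRing R] :
    scalarSubgroup n R ≤ Subgroup.center (Matrix.GeneralLinearGroup n R) := by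
  rintro g ⟨u, rfl⟩
  rw [Subgroup.mem_center_iff]
  intro x
  ext : 1
  simp only [Units.val_mul, Units.coe_map]
  exact ((Matrix.scalar_commute (u : R) (fun r' => Commute.all _ _) (x : Matrix n n R))).symm

theorem normal_of_le_center {G : Type*} [Group G] {H : Subgroup G}
    (h : H ≤ Subgroup.center G) : H.Normal := by
  constructor
  intro a ha g
  have hc : g * a = a * g := Subgroup.mem_center_iff.mp (h ha) g
  rw [hc, mul_inv_cancel_right]
  exact ha

/-- The scalar subgroup is central, hence normal, in `GL n R`. -/
instance scalarSubgroup_normal (n : Type*) [DecidableEq n] [Fintype n]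
    (R : Type*) [CommRing R] : (scalarSubgroup n R).Normal :=
  normal_of_le_center (scalarSubgroup_le_center n R)

/-- The scalar subgroup of `G`, `Scal_G = G ∩ {λ·I}`, viewed inside `G`, is normal in `G`. -/
instance scalarSubgroup_subgroupOf_normal (n : Type*) [DecidableEq n] [Fintype n]
    (R : Type*) [CommRing R] (G : Subgroup (Matrix.GeneralLinearGroup n R)) :
    ((scalarSubgroup n R).subgroupOf G).Normal :=
  (scalarSubgroup_normal n R).subgroupOf G


/-- Entrywise splitting of matrices over a product ring. -/
def matrixProdRingEquiv (n : Type*) [Fintype n] [DecidableEq n] (R S : Type*)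
    [CommRing R] [CommRing S] :
    Matrix n n (R × S) ≃+* Matrix n n R × Matrix n n S where
  toFun M := (M.map Prod.fst, M.map Prod.snd)
  invFun P := Matrix.of fun i j => (P.1 i j, P.2 i j)
  left_inv M := by ext i j <;> simp [Matrix.map_apply]
  right_inv P := by ext i j <;> simp [Matrix.map_apply]
  map_add' M N := by
    refine Prod.ext ?_ ?_ <;> ext i j <;> simp [Matrix.map_apply]
  map_mul' M N := by
    refine Prod.ext ?_ ?_ <;> ext i j <;>
      simp [Matrix.map_apply, Matrix.mul_apply, Prod.fst_sum, Prod.snd_sum]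

section CRT

variable {a₁ a₂ : ℕ} (h : a₁.Coprime a₂)

theorem crt_fst (x : ZMod (a₁ * a₂)) :
    ((ZMod.chineseRemainder h) x).1 = ZMod.castHom (dvd_mul_right a₁ a₂) (ZMod a₁) x := by
  have e : (RingHom.fst (ZMod a₁) (ZMod a₂)).comp (ZMod.chineseRemainder h).toRingHom =
      ZMod.castHom (dvd_mul_right a₁ a₂) (ZMod a₁) := Subsingleton.elim _ _
  exact RingHom.congr_fun e x

theorem crt_snd (x : ZMod (a₁ * a₂)) :
    ((ZMod.chineseRemainder h) x).2 = ZMod.castHom (dvd_mul_left a₂ a₁) (ZMod a₂) x := by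
  have e : (RingHom.snd (ZMod a₁) (ZMod a₂)).comp (ZMod.chineseRemainder h).toRingHom =
      ZMod.castHom (dvd_mul_left a₂ a₁) (ZMod a₂) := Subsingleton.elim _ _
  exact RingHom.congr_fun e x

variable (r : ℕ)

noncomputable def glProdEquiv :
    Matrix.GeneralLinearGroup (Fin r) (ZMod (a₁ * a₂)) ≃*
      Matrix.GeneralLinearGroup (Fin r) (ZMod a₁) ×
        Matrix.GeneralLinearGroup (Fin r) (ZMod a₂) :=
  (Units.mapEquiv (((ZMod.chineseRemainder h).mapMatrix.trans
      (matrixProdRingEquiv (Fin r) (ZMod a₁) (ZMod a₂))).toMulEquiv)).trans MulEquiv.prodUnits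

theorem glProdEquiv_fst (g : Matrix.GeneralLinearGroup (Fin r) (ZMod (a₁ * a₂))) :
    (glProdEquiv h r g).1 = glReduction r (dvd_mul_right a₁ a₂) g := by
  ext i j
  simp [glProdEquiv, glReduction, Matrix.GeneralLinearGroup.map, MulEquiv.prodUnits,
    matrixProdRingEquiv, Matrix.map_apply, crt_fst h]

theorem glProdEquiv_snd (g : Matrix.GeneralLinearGroup (Fin r) (ZMod (a₁ * a₂))) :
    (glProdEquiv h r g).2 = glReduction r (dvd_mul_left a₂ a₁) g := by
  ext i j
  simp [glProdEquiv, glReduction, Matrix.GeneralLinearGroup.map, MulEquiv.prodUnits,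
    matrixProdRingEquiv, Matrix.map_apply, crt_snd h]

end CRT

theorem glReduction_comp {r : ℕ} {a b c : ℕ} (h1 : c ∣ b) (h2 : b ∣ a)
    (g : Matrix.GeneralLinearGroup (Fin r) (ZMod a)) :
    glReduction r h1 (glReduction r h2 g) = glReduction r (h1.trans h2) g := by
  have e : (ZMod.castHom h1 (ZMod c)).comp (ZMod.castHom h2 (ZMod b)) =
      ZMod.castHom (h1.trans h2) (ZMod c) := Subsingleton.elim _ _
  simp only [glReduction]
  rw [← Matrix.GeneralLinearGroup.map_comp_apply, ← Matrix.GeneralLinearGroup.map_comp, e]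

theorem glReduction_scalar {r : ℕ} {a b : ℕ} (hb : b ∣ a) (u : (ZMod a)ˣ) :
    glReduction r hb (Units.map (Matrix.scalar (Fin r)).toMonoidHom u) =
      Units.map (Matrix.scalar (Fin r)).toMonoidHom
        (Units.map (ZMod.castHom hb (ZMod b)).toMonoidHom u) := by
  ext i j
  simp [glReduction, Matrix.GeneralLinearGroup.map, Matrix.scalar_apply, Matrix.diagonal,
    Matrix.map_apply, apply_ite]
  split <;> intro h' <;> simp_all

theorem mem_scalar_of_reductions {r : ℕ} {a₁ a₂ : ℕ} (h : a₁.Coprime a₂)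
    (g : Matrix.GeneralLinearGroup (Fin r) (ZMod (a₁ * a₂)))
    (h1 : glReduction r (dvd_mul_right a₁ a₂) g ∈ scalarSubgroup (Fin r) (ZMod a₁))
    (h2 : glReduction r (dvd_mul_left a₂ a₁) g ∈ scalarSubgroup (Fin r) (ZMod a₂)) :
    g ∈ scalarSubgroup (Fin r) (ZMod (a₁ * a₂)) := by
  obtain ⟨u₁, hu₁⟩ := h1
  obtain ⟨u₂, hu₂⟩ := h2
  set eu : (ZMod (a₁ * a₂))ˣ ≃* (ZMod a₁)ˣ × (ZMod a₂)ˣ :=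
    (Units.mapEquiv (ZMod.chineseRemainder h).toMulEquiv).trans MulEquiv.prodUnits with heu
  refine ⟨eu.symm (u₁, u₂), ?_⟩
  -- it suffices to show that both images under glProdEquiv agree
  have key : glProdEquiv h r (Units.map (Matrix.scalar (Fin r)).toMonoidHom (eu.symm (u₁, u₂)))
      = glProdEquiv h r g := by
    have c1 : ZMod.castHom (dvd_mul_right a₁ a₂) (ZMod a₁) ((eu.symm (u₁, u₂) : (ZMod (a₁*a₂))ˣ) : ZMod (a₁*a₂)) = (u₁ : ZMod a₁) := by
      rw [← crt_fst h]
      simp [heu, MulEquiv.prodUnits]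
    have c2 : ZMod.castHom (dvd_mul_left a₂ a₁) (ZMod a₂) ((eu.symm (u₁, u₂) : (ZMod (a₁*a₂))ˣ) : ZMod (a₁*a₂)) = (u₂ : ZMod a₂) := by
      rw [← crt_snd h]
      simp [heu, MulEquiv.prodUnits]
    refine Prod.ext ?_ ?_
    · rw [glProdEquiv_fst, glProdEquiv_fst, glReduction_scalar, ← hu₁]
      congr 1
      ext
      simpa using c1
    · rw [glProdEquiv_snd, glProdEquiv_snd, glReduction_scalar, ← hu₂]
      congr 1
      ext
      simpa using c2
  exact (glProdEquiv h r).injective key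

/-- Let `r ≥ 1`, let `a₁, a₂` be coprime positive integers, let `m ∣ a₁`, and let
`H ≤ GL_r(ℤ/mℤ)`. Let `G ≤ GL_r(ℤ/a₁a₂ℤ)` and `G₁ ≤ GL_r(ℤ/a₁ℤ)` be the full preimages of
`H` under the respective reduction maps. Then
`G/Scal_G ≅ (G₁/Scal_{G₁}) × PGL_r(ℤ/a₂ℤ)`; in particular
`|G|/|Scal_G| = (|G₁|/|Scal_{G₁}|) · |PGL_r(ℤ/a₂ℤ)|`. -/
theorem quotient_by_scalars_up_to_coprime_part (r : ℕ) (hr : 1 ≤ r) (a₁ a₂ m : ℕ)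
    (ha₁ : 0 < a₁) (ha₂ : 0 < a₂) (h : a₁.Coprime a₂) (hm : m ∣ a₁) (hm0 : 0 < m)
    (H : Subgroup (Matrix.GeneralLinearGroup (Fin r) (ZMod m)))
    (G : Subgroup (Matrix.GeneralLinearGroup (Fin r) (ZMod (a₁ * a₂))))
    (hG : G = Subgroup.comap (glReduction r (hm.trans (dvd_mul_right a₁ a₂))) H)
    (G₁ : Subgroup (Matrix.GeneralLinearGroup (Fin r) (ZMod a₁)))
    (hG₁ : G₁ = Subgroup.comap (glReduction r hm) H) :
    Nonempty
      ((G ⧸ (scalarSubgroup (Fin r) (ZMod (a₁ * a₂))).subgroupOf G) ≃*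
        (G₁ ⧸ (scalarSubgroup (Fin r) (ZMod a₁)).subgroupOf G₁) ×
          (Matrix.GeneralLinearGroup (Fin r) (ZMod a₂) ⧸ scalarSubgroup (Fin r) (ZMod a₂))) ∧
    (Nat.card G : ℚ) / (Nat.card (G ⊓ scalarSubgroup (Fin r) (ZMod (a₁ * a₂)) : Subgroup _) : ℚ) =
      ((Nat.card G₁ : ℚ) / (Nat.card (G₁ ⊓ scalarSubgroup (Fin r) (ZMod a₁) : Subgroup _) : ℚ)) *
        (Nat.card
          (Matrix.GeneralLinearGroup (Fin r) (ZMod a₂) ⧸ scalarSubgroup (Fin r) (ZMod a₂)) : ℚ) := by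
  haveI : NeZero a₁ := ⟨ha₁.ne'⟩
  haveI : NeZero a₂ := ⟨ha₂.ne'⟩
  haveI : NeZero m := ⟨hm0.ne'⟩
  haveI : NeZero (a₁ * a₂) := ⟨(Nat.mul_pos ha₁ ha₂).ne'⟩
  have d1 : a₁ ∣ a₁ * a₂ := dvd_mul_right a₁ a₂
  have d2 : a₂ ∣ a₁ * a₂ := dvd_mul_left a₂ a₁
  have memG₁ : ∀ g : G, glReduction r d1 (g : Matrix.GeneralLinearGroup (Fin r) (ZMod (a₁ * a₂))) ∈ G₁ := by
    rintro ⟨gv, hgv⟩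
    show glReduction r d1 gv ∈ G₁
    rw [hG₁, Subgroup.mem_comap, glReduction_comp hm d1]
    have hgv2 := hgv
    rw [hG, Subgroup.mem_comap] at hgv2
    exact hgv2
  set S₁ := (scalarSubgroup (Fin r) (ZMod a₁)).subgroupOf G₁ with hS₁
  set S₂ := scalarSubgroup (Fin r) (ZMod a₂) with hS₂
  set ρ₁ : G →* G₁ := ((glReduction r d1).comp G.subtype).codRestrict G₁ memG₁ with hρ₁
  set φ : G →* (G₁ ⧸ S₁) × (Matrix.GeneralLinearGroup (Fin r) (ZMod a₂) ⧸ S₂) :=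
    ((QuotientGroup.mk' S₁).comp ρ₁).prod
      ((QuotientGroup.mk' S₂).comp ((glReduction r d2).comp G.subtype)) with hφ
  have hker : φ.ker = (scalarSubgroup (Fin r) (ZMod (a₁ * a₂))).subgroupOf G := by
    ext g
    obtain ⟨gv, hgv⟩ := g
    simp only [hφ, MonoidHom.mem_ker, MonoidHom.prod_apply, Prod.mk_eq_one,
      MonoidHom.comp_apply, QuotientGroup.mk'_apply, QuotientGroup.eq_one_iff,
      Subgroup.mem_subgroupOf, hρ₁, MonoidHom.codRestrict_apply, MonoidHom.coe_comp,
      Function.comp_apply, Subgroup.coe_subtype]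
    constructor
    · rintro ⟨hk1, hk2⟩
      exact mem_scalar_of_reductions h gv hk1 hk2
    · rintro ⟨u, rfl⟩
      exact ⟨⟨Units.map (ZMod.castHom d1 (ZMod a₁)).toMonoidHom u, (glReduction_scalar d1 u).symm⟩,
        ⟨Units.map (ZMod.castHom d2 (ZMod a₂)).toMonoidHom u, (glReduction_scalar d2 u).symm⟩⟩
  have hsurj : Function.Surjective φ := by
    rintro ⟨q₁, q₂⟩
    obtain ⟨g₁, rfl⟩ := QuotientGroup.mk'_surjective S₁ q₁
    obtain ⟨g₂, rfl⟩ := QuotientGroup.mk'_surjective S₂ q₂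
    set g := (glProdEquiv h r).symm ((g₁ : Matrix.GeneralLinearGroup (Fin r) (ZMod a₁)), g₂) with hg
    have e1 : glReduction r d1 g = (g₁ : Matrix.GeneralLinearGroup (Fin r) (ZMod a₁)) := by
      rw [← glProdEquiv_fst h r, hg, MulEquiv.apply_symm_apply]
    have e2 : glReduction r d2 g = g₂ := by
      rw [← glProdEquiv_snd h r, hg, MulEquiv.apply_symm_apply]
    have hgG : g ∈ G := by
      rw [hG, Subgroup.mem_comap, ← glReduction_comp hm d1, e1]
      have hg1 : (g₁ : Matrix.GeneralLinearGroup (Fin r) (ZMod a₁)) ∈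
          Subgroup.comap (glReduction r hm) H := by rw [← hG₁]; exact g₁.2
      exact Subgroup.mem_comap.mp hg1
    refine ⟨⟨g, hgG⟩, Prod.ext ?_ ?_⟩
    · show QuotientGroup.mk' S₁ (ρ₁ ⟨g, hgG⟩) = QuotientGroup.mk' S₁ g₁
      exact congrArg _ (Subtype.ext e1)
    · show QuotientGroup.mk' S₂ (glReduction r d2 g) = QuotientGroup.mk' S₂ g₂
      exact congrArg _ e2
  let iso := (QuotientGroup.quotientMulEquivOfEq hker.symm).trans
      (QuotientGroup.quotientKerEquivOfSurjective φ hsurj)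
  refine ⟨⟨iso⟩, ?_⟩
  have e1 : Nat.card ((scalarSubgroup (Fin r) (ZMod (a₁ * a₂))).subgroupOf G) =
      Nat.card (G ⊓ scalarSubgroup (Fin r) (ZMod (a₁ * a₂)) : Subgroup _) := by
    rw [← Subgroup.inf_subgroupOf_left]
    exact Nat.card_congr (Subgroup.subgroupOfEquivOfLe inf_le_left).toEquiv
  have e1' : Nat.card S₁ =
      Nat.card (G₁ ⊓ scalarSubgroup (Fin r) (ZMod a₁) : Subgroup _) := by
    rw [hS₁, ← Subgroup.inf_subgroupOf_left]
    exact Nat.card_congr (Subgroup.subgroupOfEquivOfLe inf_le_left).toEquiv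
  have c1 := Subgroup.card_eq_card_quotient_mul_card_subgroup
    ((scalarSubgroup (Fin r) (ZMod (a₁ * a₂))).subgroupOf G)
  have c1' := Subgroup.card_eq_card_quotient_mul_card_subgroup S₁
  rw [e1] at c1
  rw [e1'] at c1'
  haveI fin1 : Finite (Matrix.GeneralLinearGroup (Fin r) (ZMod (a₁ * a₂))) := inferInstance
  haveI fin2 : Finite (Matrix.GeneralLinearGroup (Fin r) (ZMod a₁)) := inferInstance
  haveI ne1 : Nonempty (G ⊓ scalarSubgroup (Fin r) (ZMod (a₁ * a₂)) : Subgroup _) := ⟨1⟩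
  haveI ne2 : Nonempty (G₁ ⊓ scalarSubgroup (Fin r) (ZMod a₁) : Subgroup _) := ⟨1⟩
  have hpos : (0 : ℚ) < (Nat.card (G ⊓ scalarSubgroup (Fin r) (ZMod (a₁ * a₂)) : Subgroup _) : ℚ) := by
    exact_mod_cast Nat.card_pos
  have hpos' : (0 : ℚ) < (Nat.card (G₁ ⊓ scalarSubgroup (Fin r) (ZMod a₁) : Subgroup _) : ℚ) := by
    exact_mod_cast Nat.card_pos
  have hq1 : (Nat.card G : ℚ) /
      (Nat.card (G ⊓ scalarSubgroup (Fin r) (ZMod (a₁ * a₂)) : Subgroup _) : ℚ) =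
      (Nat.card (G ⧸ (scalarSubgroup (Fin r) (ZMod (a₁ * a₂))).subgroupOf G) : ℚ) := by
    rw [c1]
    push_cast
    rw [mul_div_assoc, div_self hpos.ne', mul_one]
  have hq2 : (Nat.card G₁ : ℚ) /
      (Nat.card (G₁ ⊓ scalarSubgroup (Fin r) (ZMod a₁) : Subgroup _) : ℚ) =
      (Nat.card (G₁ ⧸ S₁) : ℚ) := by
    rw [c1']
    push_cast
    rw [mul_div_assoc, div_self hpos'.ne', mul_one]
  rw [hq1, hq2]
  rw [Nat.card_congr iso.toEquiv, Nat.card_prod]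
  push_cast
  ring
end
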